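/- arXiv:2206.11923 — 6 statements merged into one kernel-verified Lean document; each statement's English description precedes it below -/
import Mathlib

section
/- Let L₀ a = Σ_j ([ℓ_j*, a]ℓ_j + ℓ_j*[a, ℓ_j]) be a Lindblad generator on A = End(H) and σ a faithful state. If Σ_j ℓ_j ⊗ (σℓ_j*σ^{-1}) = Σ_j ℓ_j* ⊗ ℓ_j (as elements of A⊗A), then L₀ is self-adjoint with respect to the GNS inner product ⟨a,b⟩_σ = tr(a*σb). -/
noncomputable section

open ContinuousLinearMap TensorProduct

/-- The algebra `A = End(H)` for `H = ℂⁿ` a finite-dimensional Hilbert space. -/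
abbrev QA (n : ℕ) := EuclideanSpace ℂ (Fin n) →L[ℂ] EuclideanSpace ℂ (Fin n)

/-- The trace of an operator on the finite-dimensional Hilbert space. -/
noncomputable def trC {n : ℕ} (a : QA n) : ℂ :=
  LinearMap.trace ℂ (EuclideanSpace ℂ (Fin n)) (a : _ →ₗ[ℂ] _)

/-- The Lindblad generator `L₀ a = Σ_j ([ℓ_j*, a] ℓ_j + ℓ_j* [a, ℓ_j])`. -/
noncomputable def lindblad {n N : ℕ} (ℓ : Fin N → QA n) (a : QA n) : QA n :=
  ∑ j : Fin N,
    ((ContinuousLinearMap.adjoint (ℓ j) ∘L a - a ∘L ContinuousLinearMap.adjoint (ℓ j)) ∘L ℓ j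
      + ContinuousLinearMap.adjoint (ℓ j) ∘L (a ∘L ℓ j - ℓ j ∘L a))

/-!
Write `Φ x = Σⱼ ℓⱼ* x ℓⱼ` and `K = Σⱼ ℓⱼ* ℓⱼ`, so that `L₀ x = 2 Φ x - (x K + K x)`.
Evaluating the tensor identity on suitable bilinear maps `A × A → A` and `A × A → ℂ` gives
`σ K = Σⱼ ℓⱼ σ ℓⱼ* = K σ` and `tr (Φ c σ b) = tr (c σ Φ b)`. With cyclicity of the trace the
first gives `tr ((c K + K c) σ b) = tr (c σ (b K + K b))`, so `tr (L₀ c σ b) = tr (c σ L₀ b)`,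
which is the claim for `c = a*` because `(L₀ a)* = L₀ a*`.
-/

section TensorCondition

variable {R A ι : Type*} [CommSemiring R] [Semiring A] [Algebra R A] {s : Finset ι}

theorem TensorProduct.sum_apply_eq_of_sum_tmul_eq {M N P : Type*} [AddCommMonoid M] [Module R M]
    [AddCommMonoid N] [Module R N] [AddCommMonoid P] [Module R P] {x x' : ι → M} {y y' : ι → N}
    (h : ∑ i ∈ s, x i ⊗ₜ[R] y i = ∑ i ∈ s, x' i ⊗ₜ[R] y' i) (B : M →ₗ[R] N →ₗ[R] P) :
    ∑ i ∈ s, B (x i) (y i) = ∑ i ∈ s, B (x' i) (y' i) := by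
  simpa only [map_sum, lift.tmul] using congrArg (lift B) h

variable {σ σinv : A} {ℓ ℓ' : ι → A}

theorem commute_sum_mul_of_sum_tmul_eq (hinv : σinv * σ = 1)
    (h : ∑ i ∈ s, ℓ i ⊗ₜ[R] (σ * ℓ' i * σinv) = ∑ i ∈ s, ℓ' i ⊗ₜ[R] ℓ i) :
    Commute σ (∑ i ∈ s, ℓ' i * ℓ i) := by
  -- both bilinear maps `(x, y) ↦ y σ x` and `(x, y) ↦ x y σ` send the identity to `Σ ℓ σ ℓ'`
  have left := sum_apply_eq_of_sum_tmul_eq h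
    ((LinearMap.mul R A).flip.compl₂ (LinearMap.mulRight R σ))
  have right := sum_apply_eq_of_sum_tmul_eq h
    ((LinearMap.mul R A).compr₂ (LinearMap.mulRight R σ))
  simp only [LinearMap.compl₂_apply, LinearMap.compr₂_apply, LinearMap.flip_apply,
    LinearMap.mul_apply', LinearMap.mulRight_apply] at left right
  calc σ * ∑ i ∈ s, ℓ' i * ℓ i = ∑ i ∈ s, σ * ℓ' i * σinv * σ * ℓ i := by
        simp only [Finset.mul_sum, mul_assoc, hinv, one_mul]
    _ = ∑ i ∈ s, ℓ i * σ * ℓ' i := left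
    _ = ∑ i ∈ s, ℓ i * (σ * ℓ' i * σinv) * σ := by simp only [mul_assoc, hinv, mul_one]
    _ = (∑ i ∈ s, ℓ' i * ℓ i) * σ := by rw [right, Finset.sum_mul]

variable (τ : A →ₗ[R] R) (hτ : ∀ x y, τ (x * y) = τ (y * x))
include hτ

theorem trace_sum_mul_mul_eq_of_sum_tmul_eq (hinv : σinv * σ = 1)
    (h : ∑ i ∈ s, ℓ i ⊗ₜ[R] (σ * ℓ' i * σinv) = ∑ i ∈ s, ℓ' i ⊗ₜ[R] ℓ i) (c b : A) :
    τ ((∑ i ∈ s, ℓ' i * c * ℓ i) * σ * b) = τ (c * σ * ∑ i ∈ s, ℓ' i * b * ℓ i) := by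
  have key := sum_apply_eq_of_sum_tmul_eq h <|
    ((LinearMap.mul R A).compl₁₂ (LinearMap.mulRight R c) (LinearMap.mulRight R (σ * b))).compr₂ τ
  simp only [LinearMap.compr₂_apply, LinearMap.compl₁₂_apply, LinearMap.mul_apply',
    LinearMap.mulRight_apply] at key
  calc τ ((∑ i ∈ s, ℓ' i * c * ℓ i) * σ * b) = ∑ i ∈ s, τ (ℓ' i * c * (ℓ i * (σ * b))) := by
        simp only [Finset.sum_mul, map_sum, mul_assoc]
    _ = ∑ i ∈ s, τ (ℓ i * (c * σ * (ℓ' i * b))) := by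
        rw [← key]
        simp only [mul_assoc, hinv, ← mul_assoc σinv σ, one_mul]
    _ = τ (c * σ * ∑ i ∈ s, ℓ' i * b * ℓ i) := by
        simp only [hτ (ℓ _), Finset.mul_sum, map_sum, mul_assoc]

theorem trace_mul_mul_eq_of_commute {K : A} (hK : Commute σ K) (c b : A) :
    τ ((c * K + K * c) * σ * b) = τ (c * σ * (b * K + K * b)) := by
  calc τ ((c * K + K * c) * σ * b) = τ (c * (K * σ) * b) + τ (K * (c * σ * b)) := by
        simp only [add_mul, map_add, mul_assoc]
    _ = τ (c * σ * (b * K + K * b)) := by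
        rw [hτ K, ← hK.eq, add_comm, mul_add, map_add]
        simp only [mul_assoc]

end TensorCondition

namespace QA

variable {n N : ℕ}

def trCₗ (n : ℕ) : QA n →ₗ[ℂ] ℂ :=
  LinearMap.trace ℂ (EuclideanSpace ℂ (Fin n)) ∘ₗ ContinuousLinearMap.coeLM ℂ

theorem trC_eq_trCₗ (a : QA n) : trC a = trCₗ n a := rfl

theorem trC_mul_comm (x y : QA n) : trC (x * y) = trC (y * x) := by
  rw [trC, trC, toLinearMap_mul, toLinearMap_mul]
  exact LinearMap.trace_mul_comm ℂ _ _

theorem lindblad_eq (ℓ : Fin N → QA n) (x : QA n) :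
    lindblad ℓ x = ∑ j, adjoint (ℓ j) * x * ℓ j + ∑ j, adjoint (ℓ j) * x * ℓ j
      - (x * ∑ j, adjoint (ℓ j) * ℓ j + (∑ j, adjoint (ℓ j) * ℓ j) * x) := by
  simp only [lindblad, ← mul_def, Finset.mul_sum, Finset.sum_mul, ← Finset.sum_add_distrib,
    ← Finset.sum_sub_distrib]
  refine Finset.sum_congr rfl fun j _ => ?_
  simp only [mul_sub, sub_mul, mul_assoc]
  abel

theorem adjoint_lindblad (ℓ : Fin N → QA n) (a : QA n) :
    adjoint (lindblad ℓ a) = lindblad ℓ (adjoint a) := by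
  simp only [lindblad, ← star_eq_adjoint, ← mul_def, star_sum, star_add, star_sub, star_mul,
    star_star]
  refine Finset.sum_congr rfl fun j _ => ?_
  simp only [mul_sub, sub_mul, mul_assoc]
  abel

theorem trC_lindblad_mul_mul {σ σinv : QA n} (hinv : σinv * σ = 1) {ℓ : Fin N → QA n}
    (h : ∑ j, ℓ j ⊗ₜ[ℂ] (σ * adjoint (ℓ j) * σinv) = ∑ j, adjoint (ℓ j) ⊗ₜ[ℂ] ℓ j)
    (c b : QA n) : trC (lindblad ℓ c * σ * b) = trC (c * σ * lindblad ℓ b) := by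
  have hτ : ∀ x y : QA n, trCₗ n (x * y) = trCₗ n (y * x) := trC_mul_comm
  have hΦ := trace_sum_mul_mul_eq_of_sum_tmul_eq (trCₗ n) hτ hinv h c b
  have hK := trace_mul_mul_eq_of_commute (trCₗ n) hτ (commute_sum_mul_of_sum_tmul_eq hinv h) c b
  have distrib : ∀ {x y : QA n}, (x + x - y) * σ * b = x * σ * b + x * σ * b - y * σ * b := by
    intros; simp only [sub_mul, add_mul]
  rw [lindblad_eq, lindblad_eq, trC_eq_trCₗ, trC_eq_trCₗ, distrib, map_sub, map_add, hΦ, hK,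
    ← map_add, ← map_sub, ← mul_add, ← mul_sub]

end QA

theorem lindblad_selfadjoint_of_tensor_condition_general (n N : ℕ) (σ σinv : QA n)
    (hσinv' : σinv ∘L σ = 1)
    (ℓ : Fin N → QA n)
    (hcond : ∑ j : Fin N,
        (ℓ j) ⊗ₜ[ℂ] ((σ ∘L ContinuousLinearMap.adjoint (ℓ j)) ∘L σinv)
      = ∑ j : Fin N, (ContinuousLinearMap.adjoint (ℓ j)) ⊗ₜ[ℂ] (ℓ j)) :
    ∀ a b : QA n,
      trC ((ContinuousLinearMap.adjoint (lindblad ℓ a) ∘L σ) ∘L b)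
        = trC ((ContinuousLinearMap.adjoint a ∘L σ) ∘L lindblad ℓ b) := by
  intro a b
  rw [QA.adjoint_lindblad]
  exact QA.trC_lindblad_mul_mul hσinv' hcond (adjoint a) b

/-- If `Σ_j ℓ_j ⊗ (σ ℓ_j* σ⁻¹) = Σ_j ℓ_j* ⊗ ℓ_j` in `A ⊗ A`, then the Lindblad
generator `L₀` is self-adjoint with respect to the GNS inner product
`⟨a,b⟩_σ = tr(a* σ b)` induced by the faithful state `σ`. -/
theorem lindblad_selfadjoint_of_tensor_condition (n N : ℕ) (σ σinv : QA n)
    (hσpos : σ.IsPositive) (hσtr : trC σ = 1)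
    (hσinv : σ ∘L σinv = 1) (hσinv' : σinv ∘L σ = 1)
    (ℓ : Fin N → QA n)
    (hcond : ∑ j : Fin N,
        (ℓ j) ⊗ₜ[ℂ] ((σ ∘L ContinuousLinearMap.adjoint (ℓ j)) ∘L σinv)
      = ∑ j : Fin N, (ContinuousLinearMap.adjoint (ℓ j)) ⊗ₜ[ℂ] (ℓ j)) :
    ∀ a b : QA n,
      trC ((ContinuousLinearMap.adjoint (lindblad ℓ a) ∘L σ) ∘L b)
        = trC ((ContinuousLinearMap.adjoint a ∘L σ) ∘L lindblad ℓ b) :=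
  lindblad_selfadjoint_of_tensor_condition_general n N σ σinv hσinv' ℓ hcond
end
end

section
/- Let g be a finite-dimensional semisimple complex Lie algebra, V a finite-dimensional irreducible unitary g-module, and B a g-submodule of End(V) (with adjoint g-action). Then for every b ∈ B, the operator norm satisfies ‖b‖ ≤ sqrt(dim B) · ‖b‖_σ, where ‖b‖_σ² = tr(b*b)/dim V is the normalized Hilbert–Schmidt norm. -/
noncomputable section

open ContinuousLinearMap

attribute [local instance 100] LieRing.ofAssociativeRing

namespace CasimirAux

lemma trC_eq_sum {n : ℕ} (a : QA n) :
    trC a = ∑ k, a (EuclideanSpace.single k 1) k := by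
  rw [trC, LinearMap.trace_eq_matrix_trace ℂ (EuclideanSpace.basisFun (Fin n) ℂ).toBasis,
    Matrix.trace]
  refine Finset.sum_congr rfl fun k _ => ?_
  rw [Matrix.diag_apply, LinearMap.toMatrix_apply]
  simp [EuclideanSpace.basisFun_toBasis]

lemma trC_eq_sum_inner {n : ℕ} (a : QA n) :
    trC a = ∑ k, (inner ℂ (EuclideanSpace.single k 1) (a (EuclideanSpace.single k 1)) : ℂ) := by
  rw [trC_eq_sum]
  refine Finset.sum_congr rfl fun k _ => ?_
  rw [EuclideanSpace.inner_single_left]; simp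

lemma trC_comp_comm {n : ℕ} (a b : QA n) : trC (a ∘L b) = trC (b ∘L a) := by
  have := LinearMap.trace_mul_comm ℂ (M := EuclideanSpace ℂ (Fin n))
    (a : EuclideanSpace ℂ (Fin n) →ₗ[ℂ] EuclideanSpace ℂ (Fin n)) (b : _ →ₗ[ℂ] _)
  simpa [trC, Module.End.mul_eq_comp] using this

lemma trC_adjoint {n : ℕ} (a : QA n) : trC (adjoint a) = starRingEnd ℂ (trC a) := by
  rw [trC_eq_sum_inner, trC_eq_sum_inner, map_sum]
  refine Finset.sum_congr rfl fun k _ => ?_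
  rw [adjoint_inner_right, ← inner_conj_symm]

lemma trC_sub {n : ℕ} (a b : QA n) : trC (a - b) = trC a - trC b := by
  simp [trC]

lemma trC_smul {n : ℕ} (c : ℂ) (a : QA n) : trC (c • a) = c * trC a := by
  simp [trC]

lemma trC_one {n : ℕ} : trC (1 : QA n) = (n : ℂ) := by
  have : ((1 : QA n) : EuclideanSpace ℂ (Fin n) →ₗ[ℂ] EuclideanSpace ℂ (Fin n))
      = LinearMap.id := rfl
  rw [trC, this, LinearMap.trace_id]
  simp

lemma entry {n : ℕ} (A : Matrix (Fin n) (Fin n) ℂ) (i j : Fin n) :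
    (Matrix.toEuclideanLin A (EuclideanSpace.single j 1)) i = A i j := by
  simp [Matrix.toEuclideanLin_apply, Matrix.mulVec_single]

/-- Hilbert–Schmidt structure: linear equivalence to a Euclidean space. -/
def Mlin (n : ℕ) : QA n ≃ₗ[ℂ] EuclideanSpace ℂ (Fin n × Fin n) where
  toFun a := WithLp.toLp 2 (fun ij : Fin n × Fin n => a (EuclideanSpace.single ij.2 1) ij.1)
  map_add' a b := by ext ⟨i, j⟩; simp
  map_smul' c a := by ext ⟨i, j⟩; simp
  invFun x := LinearMap.toContinuousLinearMap
    (Matrix.toEuclideanLin (Matrix.of fun i j => x (i, j)))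
  left_inv a := by
    apply ContinuousLinearMap.coe_injective
    apply Module.Basis.ext (EuclideanSpace.basisFun (Fin n) ℂ).toBasis
    intro j
    ext i
    simp only [EuclideanSpace.basisFun_toBasis, PiLp.basisFun_apply,
      ContinuousLinearMap.coe_coe, LinearMap.coe_toContinuousLinearMap]
    rw [show (PiLp.single 2 j (1 : ℂ) : EuclideanSpace ℂ (Fin n))
        = EuclideanSpace.single j 1 from rfl, entry]
    rfl
  right_inv x := by
    show WithLp.toLp 2 (fun ij : Fin n × Fin n => (LinearMap.toContinuousLinearMap
      (Matrix.toEuclideanLin (Matrix.of fun i j => x (i, j))))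
      (EuclideanSpace.single ij.2 1) ij.1) = x
    ext ⟨i, j⟩
    show (Matrix.toEuclideanLin (Matrix.of fun i j => x (i, j))) (EuclideanSpace.single j 1) i
      = x (i, j)
    rw [entry]
    rfl

lemma Mlin_inner {n : ℕ} (a b : QA n) :
    (inner ℂ (Mlin n a) (Mlin n b) : ℂ) = trC (adjoint a ∘L b) := by
  rw [trC_eq_sum_inner, PiLp.inner_apply, Fintype.sum_prod_type_right]
  refine Finset.sum_congr rfl fun j _ => ?_
  rw [ContinuousLinearMap.comp_apply, adjoint_inner_right, PiLp.inner_apply]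
  rfl

lemma sum_compL {n : ℕ} {ι : Type*} (s : Finset ι) (f : ι → QA n) (v : QA n) :
    (∑ i ∈ s, f i) ∘L v = ∑ i ∈ s, f i ∘L v := by
  ext u; simp [ContinuousLinearMap.sum_apply]

lemma compL_sum {n : ℕ} {ι : Type*} (s : Finset ι) (f : ι → QA n) (v : QA n) :
    v ∘L (∑ i ∈ s, f i) = ∑ i ∈ s, v ∘L f i := by
  ext u; simp [ContinuousLinearMap.sum_apply]

lemma trC_sum {n : ℕ} {ι : Type*} (s : Finset ι) (f : ι → QA n) :
    trC (∑ i ∈ s, f i) = ∑ i ∈ s, trC (f i) := by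
  simp [trC]

lemma adjointCLM_smul {n : ℕ} (c : ℂ) (a : QA n) :
    adjoint (c • a) = (starRingEnd ℂ) c • adjoint a :=
  map_smulₛₗ (ContinuousLinearMap.adjoint :
    (EuclideanSpace ℂ (Fin n) →L[ℂ] EuclideanSpace ℂ (Fin n)) ≃ₗᵢ⋆[ℂ] _) c a

lemma adjointCLM_sum {n : ℕ} {ι : Type*} (s : Finset ι) (f : ι → QA n) :
    adjoint (∑ i ∈ s, f i) = ∑ i ∈ s, adjoint (f i) :=
  map_sum (ContinuousLinearMap.adjoint :
    (EuclideanSpace ℂ (Fin n) →L[ℂ] EuclideanSpace ℂ (Fin n)) ≃ₗᵢ⋆[ℂ] _) f s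

lemma cs_sum {ι : Type*} (s : Finset ι) (f h : ι → ℝ) (hf : ∀ i ∈ s, 0 ≤ f i)
    (hh : ∀ i ∈ s, 0 ≤ h i) :
    ∑ i ∈ s, f i * h i ≤ Real.sqrt (∑ i ∈ s, f i ^ 2) * Real.sqrt (∑ i ∈ s, h i ^ 2) := by
  have h1 := Finset.sum_mul_sq_le_sq_mul_sq s f h
  have h2 : 0 ≤ ∑ i ∈ s, f i * h i :=
    Finset.sum_nonneg fun i hi => mul_nonneg (hf i hi) (hh i hi)
  have h3 : 0 ≤ ∑ i ∈ s, f i ^ 2 := Finset.sum_nonneg fun i _ => sq_nonneg _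
  calc ∑ i ∈ s, f i * h i = Real.sqrt ((∑ i ∈ s, f i * h i) ^ 2) := (Real.sqrt_sq h2).symm
    _ ≤ Real.sqrt ((∑ i ∈ s, f i ^ 2) * ∑ i ∈ s, h i ^ 2) := Real.sqrt_le_sqrt h1
    _ = _ := Real.sqrt_mul h3 _

end CasimirAux

open CasimirAux in
set_option maxHeartbeats 1000000 in
/-- Let `g` be a finite-dimensional semisimple complex Lie algebra, `V` a
finite-dimensional irreducible unitary `g`-module, and `B` a `g`-submodule of
`End(V)` (adjoint action).  Then for every `b ∈ B`, the operator norm satisfies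
`‖b‖ ≤ sqrt(dim B) · ‖b‖_σ`, where `‖b‖_σ² = tr(b*b)/dim V` is the normalized
Hilbert–Schmidt norm. -/
theorem op_norm_le_sqrt_dim_mul_hs_norm (n : ℕ) (g : Type) [LieRing g] [LieAlgebra ℂ g]
    [FiniteDimensional ℂ g] [LieAlgebra.IsSemisimple ℂ g]
    (π : g →ₗ⁅ℂ⁆ QA n)
    (hunit : ∀ x : g, ∃ y : g, π y = ContinuousLinearMap.adjoint (π x))
    (hirr : ∀ W : Submodule ℂ (EuclideanSpace ℂ (Fin n)),
      (∀ (x : g), ∀ v ∈ W, (π x) v ∈ W) → W = ⊥ ∨ W = ⊤)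
    (B : Submodule ℂ (QA n))
    (hB : ∀ (x : g), ∀ a ∈ B, π x ∘L a - a ∘L π x ∈ B) :
    ∀ b ∈ B, ‖b‖ ≤ Real.sqrt (Module.finrank ℂ B) *
      Real.sqrt ((trC (ContinuousLinearMap.adjoint b ∘L b)).re / n) := by
  intro b hb
  -- trivial case n = 0
  rcases Nat.eq_zero_or_pos n with hn | hn
  · subst hn
    have hb0 : b = 0 := Subsingleton.elim _ _
    rw [hb0]
    simp only [norm_zero, Nat.cast_zero, div_zero, Real.sqrt_zero, mul_zero, le_refl]
  haveI : Nontrivial (EuclideanSpace ℂ (Fin n)) := by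
    have : 0 < Module.finrank ℂ (EuclideanSpace ℂ (Fin n)) := by
      rw [finrank_euclideanSpace_fin]; exact hn
    exact Module.nontrivial_of_finrank_pos this
  -- Setup: image of B in Euclidean space, orthonormal basis
  set W : Submodule ℂ (EuclideanSpace ℂ (Fin n × Fin n)) :=
    B.map (Mlin n : QA n →ₗ[ℂ] EuclideanSpace ℂ (Fin n × Fin n)) with hW
  have hdW : Module.finrank ℂ W = Module.finrank ℂ B := by
    rw [hW]
    exact LinearEquiv.finrank_map_eq (Mlin n) B
  set d := Module.finrank ℂ W with hd
  set w := stdOrthonormalBasis ℂ W with hw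
  set bb : Fin d → QA n := fun i => (Mlin n).symm ((w i : EuclideanSpace ℂ (Fin n × Fin n)))
    with hbb
  have hbB : ∀ i, bb i ∈ B := by
    intro i
    obtain ⟨a, haB, ha⟩ := Submodule.mem_map.1 (w i).2
    have : bb i = a := by rw [hbb]; simp only [← ha]; exact (Mlin n).symm_apply_apply a
    rw [this]; exact haB
  have hMbb : ∀ i, Mlin n (bb i) = (w i : EuclideanSpace ℂ (Fin n × Fin n)) := by
    intro i; rw [hbb]; exact (Mlin n).apply_symm_apply _
  -- orthonormality
  have h1 : ∀ i j, trC (adjoint (bb i) ∘L bb j) = if i = j then 1 else 0 := by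
    intro i j
    rw [← Mlin_inner, hMbb, hMbb, ← Submodule.coe_inner]
    exact orthonormal_iff_ite.mp w.orthonormal i j
  -- expansion
  have h2 : ∀ a ∈ B, a = ∑ i, trC (adjoint (bb i) ∘L a) • bb i := by
    intro a haB
    have haW : Mlin n a ∈ W := Submodule.mem_map_of_mem haB
    have hrepr : ∑ i, (w.repr ⟨Mlin n a, haW⟩ i) • w i = (⟨Mlin n a, haW⟩ : W) :=
      w.sum_repr _
    have hco : ∀ i, w.repr ⟨Mlin n a, haW⟩ i = trC (adjoint (bb i) ∘L a) := by
      intro i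
      rw [w.repr_apply_apply, Submodule.coe_inner]
      show (inner ℂ ((w i : EuclideanSpace ℂ (Fin n × Fin n))) (Mlin n a) : ℂ) = _
      rw [← hMbb, Mlin_inner]
    conv_lhs => rw [← (Mlin n).symm_apply_apply a]
    have hcoe : (Mlin n) a
        = ((∑ i, (w.repr ⟨Mlin n a, haW⟩ i) • w i : W) : EuclideanSpace ℂ (Fin n × Fin n)) := by
      rw [hrepr]
    rw [hcoe, Submodule.coe_sum, map_sum]
    refine Finset.sum_congr rfl fun i _ => ?_
    rw [SetLike.val_smul, map_smul, hco]
  -- the Casimir-type operator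
  set T : QA n := ∑ i, adjoint (bb i) ∘L bb i with hT
  -- T commutes with the representation
  have hcomm : ∀ x : g, (π x) ∘L T = T ∘L (π x) := by
    intro x
    obtain ⟨y, hy⟩ := hunit x
    set p := π x with hp
    set q := π y with hq
    have hqadj : adjoint q = p := by rw [hy, adjoint_adjoint]
    set K : Fin d → QA n := fun i => q ∘L bb i - bb i ∘L q with hK
    set K' : Fin d → QA n := fun i => p ∘L bb i - bb i ∘L p with hK'
    have hKB : ∀ i, K i ∈ B := fun i => hB y _ (hbB i)
    have hK'B : ∀ i, K' i ∈ B := fun i => hB x _ (hbB i)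
    have hadjK : ∀ i, adjoint (K i) = adjoint (bb i) ∘L p - p ∘L adjoint (bb i) := by
      intro i
      rw [hK]
      simp only [map_sub, adjoint_comp, hqadj]
    have key : ∀ i j, starRingEnd ℂ (trC (adjoint (bb j) ∘L K i))
        = trC (adjoint (bb i) ∘L K' j) := by
      intro i j
      rw [← trC_adjoint]
      have e1 : adjoint (adjoint (bb j) ∘L K i) = adjoint (K i) ∘L bb j := by
        rw [adjoint_comp, adjoint_adjoint]
      rw [e1, hadjK]
      rw [ContinuousLinearMap.sub_comp, trC_sub]
      have e2 : trC ((p ∘L adjoint (bb i)) ∘L bb j) = trC (adjoint (bb i) ∘L (bb j ∘L p)) := by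
        rw [ContinuousLinearMap.comp_assoc, trC_comp_comm, ContinuousLinearMap.comp_assoc]
      rw [e2, ContinuousLinearMap.comp_assoc]
      have e3 : K' j = p ∘L bb j - bb j ∘L p := rfl
      rw [e3, ContinuousLinearMap.comp_sub, trC_sub]
    -- the key sum identity
    have hsum : ∑ i, adjoint (K i) ∘L bb i = ∑ i, adjoint (bb i) ∘L K' i := by
      have expandK : ∀ i, K i = ∑ j, trC (adjoint (bb j) ∘L K i) • bb j :=
        fun i => h2 _ (hKB i)
      have expandK' : ∀ i, K' i = ∑ j, trC (adjoint (bb j) ∘L K' i) • bb j :=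
        fun i => h2 _ (hK'B i)
      calc ∑ i, adjoint (K i) ∘L bb i
          = ∑ i, ∑ j, starRingEnd ℂ (trC (adjoint (bb j) ∘L K i)) • (adjoint (bb j) ∘L bb i) := by
            refine Finset.sum_congr rfl fun i _ => ?_
            conv_lhs => rw [expandK i]
            rw [adjointCLM_sum, sum_compL]
            refine Finset.sum_congr rfl fun j _ => ?_
            rw [adjointCLM_smul, ContinuousLinearMap.smul_comp]
        _ = ∑ i, ∑ j, trC (adjoint (bb i) ∘L K' j) • (adjoint (bb j) ∘L bb i) := by
            refine Finset.sum_congr rfl fun i _ => Finset.sum_congr rfl fun j _ => ?_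
            rw [key]
        _ = ∑ j, adjoint (bb j) ∘L K' j := by
            rw [Finset.sum_comm]
            refine Finset.sum_congr rfl fun j _ => ?_
            conv_rhs => rw [expandK' j]
            rw [compL_sum]
            refine Finset.sum_congr rfl fun i _ => ?_
            rw [ContinuousLinearMap.comp_smul]
    -- conclude the commutation
    have expand : ∀ i, p ∘L (adjoint (bb i) ∘L bb i) - (adjoint (bb i) ∘L bb i) ∘L p
        = adjoint (bb i) ∘L K' i - adjoint (K i) ∘L bb i := by
      intro i
      rw [hadjK]
      have e3 : K' i = p ∘L bb i - bb i ∘L p := rfl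
      rw [e3, ContinuousLinearMap.comp_sub, ContinuousLinearMap.sub_comp,
        ContinuousLinearMap.comp_assoc, ContinuousLinearMap.comp_assoc,
        ← ContinuousLinearMap.comp_assoc p]
      abel
    have : p ∘L T - T ∘L p = 0 := by
      rw [hT, compL_sum, sum_compL, ← Finset.sum_sub_distrib]
      calc ∑ i, (p ∘L (adjoint (bb i) ∘L bb i) - (adjoint (bb i) ∘L bb i) ∘L p)
          = ∑ i, (adjoint (bb i) ∘L K' i - adjoint (K i) ∘L bb i) := by
            exact Finset.sum_congr rfl fun i _ => expand i
        _ = 0 := by rw [Finset.sum_sub_distrib, hsum, sub_self]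
    have := sub_eq_zero.mp this
    exact this
  -- Schur: T is a scalar
  have hnC : (n : ℂ) ≠ 0 := Nat.cast_ne_zero.mpr hn.ne'
  have hμ : ∀ v, T v = ((d : ℂ) / n) • v := by
    obtain ⟨μ, hμ⟩ := Module.End.exists_eigenvalue
      (T : EuclideanSpace ℂ (Fin n) →ₗ[ℂ] EuclideanSpace ℂ (Fin n))
    set W0 := Module.End.eigenspace
      (T : EuclideanSpace ℂ (Fin n) →ₗ[ℂ] EuclideanSpace ℂ (Fin n)) μ with hW0
    have hW0inv : ∀ x : g, ∀ v ∈ W0, π x v ∈ W0 := by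
      intro x v hv
      rw [hW0, Module.End.mem_eigenspace_iff] at hv ⊢
      have happ := congrArg (fun f : QA n => f v) (hcomm x)
      simp only [ContinuousLinearMap.comp_apply] at happ
      show T (π x v) = μ • π x v
      calc T (π x v) = π x (T v) := happ.symm
        _ = π x (μ • v) := by rw [show T v = μ • v from hv]
        _ = μ • π x v := map_smul _ _ _
    have hall : ∀ v, T v = μ • v := by
      rcases hirr W0 hW0inv with h0 | h0
      · exact absurd h0 hμ
      · intro v
        have hv : v ∈ W0 := h0 ▸ Submodule.mem_top
        exact Module.End.mem_eigenspace_iff.1 hv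
    have hTform : T = μ • (1 : QA n) := by
      ext v
      rw [hall v]
      rfl
    have htr1 : trC T = (d : ℂ) := by
      rw [hT, trC_sum]
      have : ∀ i : Fin d, trC (adjoint (bb i) ∘L bb i) = 1 := by
        intro i; rw [h1 i i]; simp
      rw [Finset.sum_congr rfl fun i _ => this i]
      simp
    have htr2 : trC T = μ * n := by rw [hTform, trC_smul, trC_one]
    have hμval : μ = (d : ℂ) / n := by
      rw [eq_div_iff hnC, ← htr2, htr1]
    intro v
    rw [← hμval]
    exact hall v
  -- sum of norms identity
  have hsumnorm : ∀ v : EuclideanSpace ℂ (Fin n),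
      ∑ i, ‖bb i v‖ ^ 2 = ((d : ℝ) / n) * ‖v‖ ^ 2 := by
    intro v
    have e1 : (inner ℂ v (T v) : ℂ) = ∑ i, (inner ℂ (bb i v) (bb i v) : ℂ) := by
      rw [hT]
      rw [ContinuousLinearMap.sum_apply, inner_sum]
      refine Finset.sum_congr rfl fun i _ => ?_
      rw [ContinuousLinearMap.comp_apply, adjoint_inner_right]
    have e2 : (inner ℂ v (T v) : ℂ) = (((d : ℝ) / n) * ‖v‖ ^ 2 : ℝ) := by
      rw [hμ v, inner_smul_right, inner_self_eq_norm_sq_to_K]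
      push_cast
      ring_nf
      norm_cast
    have h3 := congrArg Complex.re (e1.symm.trans e2)
    rw [Complex.re_sum, Complex.ofReal_re] at h3
    have hre : ∀ i : Fin d, (inner ℂ (bb i v) (bb i v) : ℂ).re = ‖bb i v‖ ^ 2 := by
      intro i
      rw [inner_self_eq_norm_sq_to_K]
      norm_cast
    calc ∑ i, ‖bb i v‖ ^ 2 = ∑ i, (inner ℂ (bb i v) (bb i v) : ℂ).re :=
          Finset.sum_congr rfl fun i _ => (hre i).symm
      _ = _ := h3
  -- expansion of b
  set c : Fin d → ℂ := fun i => trC (adjoint (bb i) ∘L b) with hc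
  have hbexp : b = ∑ i, c i • bb i := h2 b hb
  have hS : (0:ℝ) ≤ ∑ i, ‖c i‖ ^ 2 := Finset.sum_nonneg fun i _ => sq_nonneg _
  -- trace of b† b
  have htrb : (trC (adjoint b ∘L b)).re = ∑ i, ‖c i‖ ^ 2 := by
    have : trC (adjoint b ∘L b) = ((∑ i, ‖c i‖ ^ 2 : ℝ) : ℂ) := by
      conv_lhs => rw [hbexp]
      rw [adjointCLM_sum, sum_compL, trC_sum]
      have : ∀ i : Fin d, trC (adjoint (c i • bb i) ∘L ∑ j, c j • bb j)
          = starRingEnd ℂ (c i) * c i := by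
        intro i
        rw [adjointCLM_smul, ContinuousLinearMap.smul_comp, trC_smul, compL_sum, trC_sum]
        have : ∀ j : Fin d, trC (adjoint (bb i) ∘L (c j • bb j))
            = c j * trC (adjoint (bb i) ∘L bb j) := by
          intro j
          rw [ContinuousLinearMap.comp_smul, trC_smul]
        rw [Finset.sum_congr rfl fun j _ => this j]
        rw [Finset.sum_congr rfl fun j _ => by rw [h1 i j]]
        simp [Finset.sum_ite_eq, mul_comm]
      rw [Finset.sum_congr rfl fun i _ => this i]
      push_cast
      refine Finset.sum_congr rfl fun i _ => ?_
      rw [mul_comm, Complex.mul_conj]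
      rw [Complex.normSq_eq_norm_sq]
      norm_cast
    rw [this, Complex.ofReal_re]
  -- pointwise bound
  have hbound : ∀ v : EuclideanSpace ℂ (Fin n),
      ‖b v‖ ≤ (Real.sqrt (∑ i, ‖c i‖ ^ 2) * Real.sqrt ((d : ℝ) / n)) * ‖v‖ := by
    intro v
    have h0 : b v = ∑ i, c i • bb i v := by
      conv_lhs => rw [hbexp]
      rw [ContinuousLinearMap.sum_apply]
      rfl
    calc ‖b v‖ = ‖∑ i, c i • bb i v‖ := by rw [h0]
      _ ≤ ∑ i, ‖c i • bb i v‖ := norm_sum_le _ _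
      _ = ∑ i, ‖c i‖ * ‖bb i v‖ := by
          refine Finset.sum_congr rfl fun i _ => norm_smul _ _
      _ ≤ Real.sqrt (∑ i, ‖c i‖ ^ 2) * Real.sqrt (∑ i, ‖bb i v‖ ^ 2) :=
          cs_sum _ _ _ (fun i _ => norm_nonneg _) (fun i _ => norm_nonneg _)
      _ = (Real.sqrt (∑ i, ‖c i‖ ^ 2) * Real.sqrt ((d : ℝ) / n)) * ‖v‖ := by
          rw [hsumnorm v, Real.sqrt_mul (by positivity), Real.sqrt_sq (norm_nonneg v)]
          ring
  -- conclude
  have hfin : ‖b‖ ≤ Real.sqrt (∑ i, ‖c i‖ ^ 2) * Real.sqrt ((d : ℝ) / n) :=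
    ContinuousLinearMap.opNorm_le_bound b (by positivity) hbound
  rw [htrb, ← hdW]
  calc ‖b‖ ≤ Real.sqrt (∑ i, ‖c i‖ ^ 2) * Real.sqrt ((d : ℝ) / n) := hfin
    _ = Real.sqrt d * Real.sqrt ((∑ i, ‖c i‖ ^ 2) / n) := by
        rw [← Real.sqrt_mul hS, ← Real.sqrt_mul (Nat.cast_nonneg d)]
        congr 1
        ring
end
end

section
/- For the root system of type A_r realized as Φ = {e_i - e_j : 1 ≤ i ≠ j ≤ n} in E = (e₁+...+e_n)^⊥ ⊂ ℝⁿ (n = r+1), with positive roots Φ₊ = {e_i - e_j : i < j}, the minimum of (μ | μ + 2δ) over nonzero μ in P⁺ ∩ Λ⁺ is achieved at the highest root θ = e₁ - e_n. Here 2δ = Σ_{i=1}^n (n+1-2i)e_i, P⁺ is the ℤ₊-span of Φ₊, and Λ⁺ is the set of dominant integral weights. Consequently min_{μ ∈ Λ⁺∩P⁺, μ≠0} (μ|μ+2δ)/(θ|θ+2δ) = 1. -/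
noncomputable section

/-- Type `A_{n-1}`: for `μ = Σ k_i e_i` with `k₁ ≥ ... ≥ k_{n-1} ≥ 0`, `Σ k_i = 0`
(i.e. `μ ∈ P⁺ ∩ Λ⁺`, in 0-based coordinates), the quantity
`(μ|μ+2δ) = Σ_i k_i (k_i + 2(n-1-i))` is minimized, over nonzero `μ`, at the
highest root `θ = e₁ - e_n` with value `2n`; hence `g₀ = 1` for type `A`. -/
theorem typeA_min_at_highest_root (n : ℕ) (hn : 2 ≤ n) :
    (∑ i : Fin n,
        (if (i : ℕ) = 0 then (1 : ℤ) else if (i : ℕ) = n - 1 then -1 else 0) *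
        ((if (i : ℕ) = 0 then (1 : ℤ) else if (i : ℕ) = n - 1 then -1 else 0)
          + 2 * ((n : ℤ) - 1 - (i : ℕ)))) = 2 * n
    ∧ IsLeast {s : ℤ | ∃ k : Fin n → ℤ,
        (∀ i j : Fin n, i ≤ j → (j : ℕ) + 1 < n → k j ≤ k i) ∧
        (∀ i : Fin n, (i : ℕ) + 1 < n → 0 ≤ k i) ∧
        (∑ i : Fin n, k i = 0) ∧ k ≠ 0 ∧
        s = ∑ i : Fin n, k i * (k i + 2 * ((n : ℤ) - 1 - (i : ℕ)))} (2 * n) := by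
  have hn0 : 0 < n := by omega
  have hn1 : n - 1 < n := by omega
  have hcastN : ((n - 1 : ℕ) : ℤ) = (n : ℤ) - 1 := by omega
  set i0 : Fin n := ⟨0, hn0⟩ with hi0
  set iN : Fin n := ⟨n - 1, hn1⟩ with hiN
  have hne01 : i0 ≠ iN := by
    intro h
    have h2 : (i0 : ℕ) = (iN : ℕ) := by rw [h]
    simp only [hi0, hiN, Fin.val_mk] at h2
    omega
  set θ : Fin n → ℤ := fun i =>
    if (i : ℕ) = 0 then (1 : ℤ) else if (i : ℕ) = n - 1 then -1 else 0 with hθ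
  have hsplit : ∀ f : Fin n → ℤ, ∑ i : Fin n, f i =
      f iN + (f i0 + ∑ i ∈ (Finset.univ.erase iN).erase i0, f i) := by
    intro f
    rw [← Finset.add_sum_erase _ _ (Finset.mem_univ iN),
        ← Finset.add_sum_erase _ _ (Finset.mem_erase.mpr ⟨hne01, Finset.mem_univ i0⟩)]
  have hmem : ∀ i : Fin n, i ∈ (Finset.univ.erase iN).erase i0 →
      (i : ℕ) ≠ 0 ∧ (i : ℕ) ≠ n - 1 := by
    intro i hi
    simp only [Finset.mem_erase, Finset.mem_univ, and_true] at hi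
    constructor
    · intro h; exact hi.1 (by simp [hi0, Fin.ext_iff, h])
    · intro h; exact hi.2 (by simp [hiN, Fin.ext_iff, h])
  have hval : (∑ i : Fin n, θ i * (θ i + 2 * ((n : ℤ) - 1 - (i : ℕ)))) = 2 * n := by
    rw [hsplit]
    have h1 : ∑ i ∈ (Finset.univ.erase iN).erase i0,
        θ i * (θ i + 2 * ((n : ℤ) - 1 - (i : ℕ))) = 0 := by
      apply Finset.sum_eq_zero
      intro i hi
      obtain ⟨h1, h2⟩ := hmem i hi
      simp [hθ, h1, h2]
    rw [h1]
    have e0 : θ i0 = 1 := by simp [hθ, hi0]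
    have eN : θ iN = -1 := by
      simp only [hθ, hiN]
      have : ¬ (n - 1 = 0) := by omega
      simp [this]
    rw [e0, eN]
    simp only [hi0, hiN]
    push_cast [hcastN]
    ring
  constructor
  · exact hval
  constructor
  · -- membership
    refine ⟨θ, ?_, ?_, ?_, ?_, hval.symm⟩
    · intro i j hij hj
      rw [Fin.le_def] at hij
      simp only [hθ]
      split_ifs <;> omega
    · intro i hi
      simp only [hθ]
      split_ifs <;> omega
    · rw [hsplit]
      have h1 : ∑ i ∈ (Finset.univ.erase iN).erase i0, θ i = 0 := by
        apply Finset.sum_eq_zero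
        intro i hi
        obtain ⟨h1, h2⟩ := hmem i hi
        simp [hθ, h1, h2]
      have e0 : θ i0 = 1 := by simp [hθ, hi0]
      have eN : θ iN = -1 := by
        simp only [hθ, hiN]
        have : ¬ (n - 1 = 0) := by omega
        simp [this]
      rw [h1, e0, eN]; ring
    · intro h
      have := congrFun h i0
      simp [hθ, hi0] at this
  · -- lower bound
    rintro s ⟨k, hmono, hpos, hsum, hne, rfl⟩
    have hk0 : 1 ≤ k i0 := by
      by_contra h
      push_neg at h
      have hz : ∀ i : Fin n, (i : ℕ) + 1 < n → k i = 0 := by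
        intro i hi
        have h1 : k i ≤ k i0 := hmono i0 i (by rw [Fin.le_def]; simp [hi0]) hi
        have h2 : 0 ≤ k i := hpos i hi
        omega
      have hzN : k iN = 0 := by
        have := hsum
        rw [← Finset.add_sum_erase _ _ (Finset.mem_univ iN)] at this
        have h2 : ∑ i ∈ Finset.univ.erase iN, k i = 0 := by
          apply Finset.sum_eq_zero
          intro i hi
          simp only [Finset.mem_erase, Finset.mem_univ, and_true] at hi
          apply hz
          have : (i : ℕ) ≠ n - 1 := fun h => hi (by simp [hiN, Fin.ext_iff, h])
          omega
        omega
      apply hne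
      funext i
      by_cases hi : (i : ℕ) + 1 < n
      · exact hz i hi
      · have : i = iN := by
          rw [Fin.ext_iff]; simp [hiN]; omega
        rw [this]; exact hzN
    have hkN : k iN ≤ -1 := by
      have h1 : ∑ i ∈ Finset.univ.erase iN, k i = - k iN := by
        have := hsum
        rw [← Finset.add_sum_erase _ _ (Finset.mem_univ iN)] at this
        omega
      have h2 : k i0 ≤ ∑ i ∈ Finset.univ.erase iN, k i := by
        apply Finset.single_le_sum (f := k)
        · intro i hi
          simp only [Finset.mem_erase, Finset.mem_univ, and_true] at hi
          apply hpos
          have : (i : ℕ) ≠ n - 1 := fun h => hi (by simp [hiN, Fin.ext_iff, h])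
          have := i.isLt; omega
        · exact Finset.mem_erase.mpr ⟨hne01, Finset.mem_univ i0⟩
      omega
    rw [hsplit]
    have hrest : 0 ≤ ∑ i ∈ (Finset.univ.erase iN).erase i0,
        k i * (k i + 2 * ((n : ℤ) - 1 - (i : ℕ))) := by
      apply Finset.sum_nonneg
      intro i hi
      obtain ⟨h1, h2⟩ := hmem i hi
      have hi' : (i : ℕ) + 1 < n := by have := i.isLt; omega
      have hp := hpos i hi'
      have : (0:ℤ) ≤ (n : ℤ) - 1 - (i : ℕ) := by
        have := i.isLt; omega
      nlinarith
    have hN : (1:ℤ) ≤ k iN * (k iN + 2 * ((n : ℤ) - 1 - ((iN : ℕ) : ℤ))) := by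
      have : ((iN : ℕ) : ℤ) = (n : ℤ) - 1 := by simp [hiN, hcastN]
      rw [this]
      nlinarith
    have h0 : 2 * (n:ℤ) - 1 ≤ k i0 * (k i0 + 2 * ((n : ℤ) - 1 - ((i0 : ℕ) : ℤ))) := by
      have : ((i0 : ℕ) : ℤ) = 0 := by simp [hi0]
      rw [this]
      nlinarith [hk0, (by exact_mod_cast hn : (2:ℤ) ≤ (n:ℤ))]
    linarith
end
end

section
/- For the root system of type B_r (r ≥ 2) realized in ℝ^r with Φ₊ = {e_i ± e_j : i < j} ∪ {e_i}, 2δ = Σ_i (2r+1-2i)e_i, and highest root θ = e₁ + e₂: the minimum of (μ|μ+2δ) over nonzero μ ∈ P⁺∩Λ⁺ = {Σ k_i e_i ∈ ℤ^r : k₁ ≥ ... ≥ k_r ≥ 0} equals 2r, achieved at μ = e₁, while (θ|θ+2δ) = 2(2r-1). Hence g₀ := min_{μ≠0} (μ|μ+2δ)/(θ|θ+2δ) = r/(2r-1). -/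
noncomputable section

/-- Type `B_r` (`r ≥ 2`): for `μ = Σ k_i e_i` with `k₁ ≥ ... ≥ k_r ≥ 0` integers
(i.e. `μ ∈ P⁺ ∩ Λ⁺`), the quantity `(μ|μ+2δ) = Σ_i k_i (k_i + 2r+1-2i)` has
minimum `2r` over nonzero `μ`, achieved at `μ = e₁`, while the highest root
`θ = e₁ + e₂` gives `(θ|θ+2δ) = 2(2r-1)`.  Hence `g₀ = r/(2r-1)`. -/
theorem typeB_gap (r : ℕ) (hr : 2 ≤ r) :
    IsLeast {s : ℤ | ∃ k : Fin r → ℤ,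
        (∀ i j : Fin r, i ≤ j → k j ≤ k i) ∧
        (∀ i : Fin r, 0 ≤ k i) ∧ k ≠ 0 ∧
        s = ∑ i : Fin r, k i * (k i + (2 * (r : ℤ) - 1 - 2 * (i : ℕ)))} (2 * r)
    ∧ (∑ i : Fin r,
        (if (i : ℕ) < 2 then (1 : ℤ) else 0) *
        ((if (i : ℕ) < 2 then (1 : ℤ) else 0) + (2 * (r : ℤ) - 1 - 2 * (i : ℕ))))
      = 2 * (2 * r - 1)
    ∧ (2 * (r : ℚ)) / (2 * (2 * r - 1)) = (r : ℚ) / (2 * r - 1) := by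
  have hr0 : 0 < r := by omega
  refine ⟨⟨?_, ?_⟩, ?_, ?_⟩
  · -- membership: k = e₁
    refine ⟨fun i => if (i : ℕ) = 0 then 1 else 0, ?_, ?_, ?_, ?_⟩
    · intro i j hij
      by_cases hj : (j : ℕ) = 0
      · have : (i : ℕ) = 0 := by omega
        simp [hj, this]
      · simp [hj]
        split <;> norm_num
    · intro i; simp only; split <;> norm_num
    · intro h
      have := congrFun h ⟨0, hr0⟩
      simp at this
    · rw [Fin.sum_univ_eq_sum_range (fun n => (if n = 0 then (1:ℤ) else 0) *
        ((if n = 0 then (1:ℤ) else 0) + (2 * (r : ℤ) - 1 - 2 * n)))]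
      rw [Finset.sum_eq_single_of_mem 0 (Finset.mem_range.mpr hr0)]
      · norm_num
      · intro b _ hb; simp [hb]
  · -- lower bound
    rintro s ⟨k, hmono, hnn, hne, rfl⟩
    obtain ⟨j, hj⟩ : ∃ j, k j ≠ 0 := by
      by_contra h; push_neg at h; exact hne (funext fun i => h i)
    have h0 : (⟨0, hr0⟩ : Fin r) ≤ j := Fin.mk_le_of_le_val (Nat.zero_le _)
    have hk0 : 1 ≤ k ⟨0, hr0⟩ := by
      have h1 : 1 ≤ k j := (hnn j).lt_of_ne (Ne.symm hj)
      exact le_trans h1 (hmono _ _ h0)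
    have hterm : ∀ i : Fin r, 0 ≤ k i * (k i + (2 * (r : ℤ) - 1 - 2 * (i : ℕ))) := by
      intro i
      have hi : (i : ℕ) < r := i.2
      have hc : (0:ℤ) ≤ 2 * (r : ℤ) - 1 - 2 * (i : ℕ) := by
        have : (i : ℤ) < (r : ℤ) := by exact_mod_cast hi
        omega
      exact mul_nonneg (hnn i) (by linarith [hnn i])
    have hle := Finset.single_le_sum (f := fun i : Fin r =>
      k i * (k i + (2 * (r : ℤ) - 1 - 2 * (i : ℕ))))
      (fun i _ => hterm i) (Finset.mem_univ (⟨0, hr0⟩ : Fin r))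
    have h2r : (2 * r : ℤ) ≤ k ⟨0, hr0⟩ * (k ⟨0, hr0⟩ + (2 * (r : ℤ) - 1 - 2 * (0 : ℕ))) := by
      have hrZ : (1:ℤ) ≤ (r:ℤ) := by exact_mod_cast hr0
      have hmul := mul_nonneg (by linarith : (0:ℤ) ≤ k ⟨0, hr0⟩ - 1)
        (by linarith : (0:ℤ) ≤ k ⟨0, hr0⟩ + 2 * (r:ℤ))
      push_cast
      nlinarith
    simpa using le_trans h2r hle
  · -- θ computation
    rw [Fin.sum_univ_eq_sum_range (fun n => (if n < 2 then (1:ℤ) else 0) *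
      ((if n < 2 then (1:ℤ) else 0) + (2 * (r : ℤ) - 1 - 2 * n)))]
    rw [← Finset.sum_subset (Finset.range_subset_range.mpr hr)
      (fun x _ hx => by simp at hx; simp [hx, Nat.not_lt_of_ge hx])]
    simp [Finset.sum_range_succ]
    ring
  · have h2 : (2:ℚ) ≠ 0 := two_ne_zero
    rw [mul_div_mul_left _ _ h2]
end
end

section
/- For the root system of type C_r (r ≥ 3) realized in ℝ^r with Φ₊ = {e_i ± e_j : i < j} ∪ {2e_i}, 2δ = 2Σ_i (r+1-i)e_i, highest root θ = 2e₁, and P⁺∩Λ⁺ = {Σ k_i e_i ∈ ℤ^r : k₁ ≥ ... ≥ k_r ≥ 0, Σ k_i even}: the minimum of (μ|μ+2δ) over nonzero μ in P⁺∩Λ⁺ equals 4r, achieved at μ = e₁ + e₂, while (θ|θ+2δ) = 4(r+1). Hence g₀ = r/(r+1). -/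
noncomputable section

lemma typeC_sum1 (r : ℕ) (hr : 3 ≤ r) :
    (∑ i : Fin r,
        (if (i : ℕ) < 2 then (1 : ℤ) else 0) *
        ((if (i : ℕ) < 2 then (1 : ℤ) else 0) + 2 * ((r : ℤ) - (i : ℕ))))
      = 4 * r := by
  rw [Fin.sum_univ_eq_sum_range (fun n => (if n < 2 then (1:ℤ) else 0) *
      ((if n < 2 then (1:ℤ) else 0) + 2 * ((r:ℤ) - n)))]
  rw [← Finset.sum_subset (Finset.range_subset_range.2 (by omega : 2 ≤ r))]
  · rw [Finset.sum_range_succ, Finset.sum_range_succ, Finset.sum_range_zero]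
    norm_num; ring
  · intro x _ hx
    simp only [Finset.mem_range, not_lt] at hx
    rw [if_neg (by omega)]
    ring

lemma typeC_sum1' (r : ℕ) (hr : 3 ≤ r) :
    (∑ i : Fin r, (if (i : ℕ) < 2 then (1 : ℤ) else 0)) = 2 := by
  rw [Fin.sum_univ_eq_sum_range (fun n => (if n < 2 then (1:ℤ) else 0))]
  rw [← Finset.sum_subset (Finset.range_subset_range.2 (by omega : 2 ≤ r))]
  · rw [Finset.sum_range_succ, Finset.sum_range_succ, Finset.sum_range_zero]
    norm_num
  · intro x _ hx
    simp only [Finset.mem_range, not_lt] at hx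
    rw [if_neg (by omega)]

/-- Type `C_r` (`r ≥ 3`): for `μ = Σ k_i e_i` with `k₁ ≥ ... ≥ k_r ≥ 0` integers
and `Σ k_i` even (i.e. `μ ∈ P⁺ ∩ Λ⁺`), the quantity
`(μ|μ+2δ) = Σ_i k_i (k_i + 2(r+1-i))` has minimum `4r` over nonzero `μ`,
achieved at `μ = e₁ + e₂`, while the highest root `θ = 2e₁` gives
`(θ|θ+2δ) = 4(r+1)`.  Hence `g₀ = r/(r+1)`. -/
theorem typeC_gap (r : ℕ) (hr : 3 ≤ r) :
    IsLeast {s : ℤ | ∃ k : Fin r → ℤ,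
        (∀ i j : Fin r, i ≤ j → k j ≤ k i) ∧
        (∀ i : Fin r, 0 ≤ k i) ∧
        (2 ∣ ∑ i : Fin r, k i) ∧ k ≠ 0 ∧
        s = ∑ i : Fin r, k i * (k i + 2 * ((r : ℤ) - (i : ℕ)))} (4 * r)
    ∧ (∑ i : Fin r,
        (if (i : ℕ) < 2 then (1 : ℤ) else 0) *
        ((if (i : ℕ) < 2 then (1 : ℤ) else 0) + 2 * ((r : ℤ) - (i : ℕ))))
      = 4 * r
    ∧ (∑ i : Fin r,
        (if (i : ℕ) = 0 then (2 : ℤ) else 0) *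
        ((if (i : ℕ) = 0 then (2 : ℤ) else 0) + 2 * ((r : ℤ) - (i : ℕ))))
      = 4 * (r + 1)
    ∧ (4 * (r : ℚ)) / (4 * (r + 1)) = (r : ℚ) / (r + 1) := by
  have hr' : (3 : ℤ) ≤ r := by exact_mod_cast hr
  refine ⟨⟨?_, ?_⟩, typeC_sum1 r hr, ?_, ?_⟩
  · -- membership
    refine ⟨fun i => if (i : ℕ) < 2 then (1 : ℤ) else 0, ?_, ?_, ?_, ?_, ?_⟩
    · intro i j hij
      have : (i : ℕ) ≤ (j : ℕ) := hij
      dsimp only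
      split_ifs with h1 h2 <;> omega
    · intro i; dsimp only; split_ifs <;> norm_num
    · rw [typeC_sum1' r hr]
    · intro h
      have h0 : (⟨0, by omega⟩ : Fin r) = (⟨0, by omega⟩ : Fin r) := rfl
      have := congrFun h ⟨0, by omega⟩
      simp at this
    · exact (typeC_sum1 r hr).symm
  · -- lower bound
    rintro s ⟨k, hmono, hnn, hpar, hne, rfl⟩
    set i0 : Fin r := ⟨0, by omega⟩
    set i1 : Fin r := ⟨1, by omega⟩
    have hterm : ∀ i : Fin r, 0 ≤ k i * (k i + 2 * ((r : ℤ) - (i : ℕ))) := by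
      intro i
      have hi : ((i : ℕ) : ℤ) < r := by exact_mod_cast i.2
      have := hnn i
      nlinarith
    have hsub : ({i0, i1} : Finset (Fin r)) ⊆ Finset.univ := Finset.subset_univ _
    have hne01 : i0 ≠ i1 := by simp [i0, i1, Fin.ext_iff]
    have hge : k i0 * (k i0 + 2 * ((r : ℤ) - (i0 : ℕ))) +
        k i1 * (k i1 + 2 * ((r : ℤ) - (i1 : ℕ))) ≤
        ∑ i : Fin r, k i * (k i + 2 * ((r : ℤ) - (i : ℕ))) := by
      have h2 := Finset.sum_le_sum_of_subset_of_nonneg (f := fun i : Fin r =>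
        k i * (k i + 2 * ((r : ℤ) - (i : ℕ)))) hsub (fun i _ _ => hterm i)
      rw [Finset.sum_pair (f := fun i : Fin r =>
        k i * (k i + 2 * ((r : ℤ) - (i : ℕ)))) hne01] at h2
      exact h2
    have hi0v : ((i0 : ℕ) : ℤ) = 0 := by simp [i0]
    have hi1v : ((i1 : ℕ) : ℤ) = 1 := by simp [i1]
    have hk0 : 1 ≤ k i0 := by
      obtain ⟨j, hj⟩ := Function.ne_iff.1 hne
      have h1 : 1 ≤ k j := by have := hnn j; simp at hj; omega
      have h2 : k j ≤ k i0 := hmono i0 j (by exact Fin.mk_le_of_le_val (Nat.zero_le _))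
      omega
    rcases le_or_gt 2 (k i0) with h2 | h2
    · have : 4 * (r : ℤ) + 4 ≤ k i0 * (k i0 + 2 * ((r : ℤ) - (i0 : ℕ))) := by
        rw [hi0v]; nlinarith
      have h1 := hterm i1
      linarith
    · have hk0e : k i0 = 1 := by omega
      have hk1 : 1 ≤ k i1 := by
        by_contra h
        have hk1z : k i1 = 0 := by have := hnn i1; omega
        have hzero : ∀ j : Fin r, j ≠ i0 → k j = 0 := by
          intro j hj
          have hj1 : (1 : ℕ) ≤ (j : ℕ) := by
            rcases Nat.eq_zero_or_pos (j : ℕ) with h | h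
            · exact absurd (Fin.ext h) hj
            · omega
          have := hmono i1 j (by exact Fin.mk_le_of_le_val hj1)
          have := hnn j
          omega
        have hsum : (∑ i : Fin r, k i) = k i0 :=
          Finset.sum_eq_single i0 (fun j _ hj => hzero j hj)
            (fun h => absurd (Finset.mem_univ i0) h)
        rw [hsum, hk0e] at hpar
        omega
      have hk1e : k i1 = 1 := by
        have := hmono i0 i1 (by exact Fin.mk_le_of_le_val (Nat.zero_le _))
        omega
      have : k i0 * (k i0 + 2 * ((r : ℤ) - (i0 : ℕ))) +
          k i1 * (k i1 + 2 * ((r : ℤ) - (i1 : ℕ))) = 4 * r := by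
        rw [hi0v, hi1v, hk0e, hk1e]; ring
      linarith
  · -- theta sum
    rw [Fin.sum_univ_eq_sum_range (fun n => (if n = 0 then (2:ℤ) else 0) *
        ((if n = 0 then (2:ℤ) else 0) + 2 * ((r:ℤ) - n)))]
    rw [Finset.sum_eq_single 0]
    · norm_num; ring
    · intro b _ hb; rw [if_neg hb]; ring
    · intro h; simp at h; omega
  · rw [mul_div_mul_left _ _ (by norm_num : (4:ℚ) ≠ 0)]
end
end

section
/- Let A be the 4×4 Cartan matrix of F₄. Its inverse is A^{-1} = [[2,3,2,1],[3,6,4,2],[4,8,6,3],[2,4,3,2]]. With normalization ‖α₁‖² = ‖α₂‖² = 2, ‖α₃‖² = ‖α₄‖² = 1, Gram matrix S = D·A^{-1} where D = diag(1,1,1/2,1/2), 2δ = 16α₁+30α₂+42α₃+22α₄, and highest root θ = ϖ₁: the minimum over nonzero n ∈ ℤ₊⁴ of (μ|μ+2δ) = nᵀSn + RᵀDn (R = (16,30,42,22)) is 12, achieved at n = (0,0,0,1), while (θ|θ+2δ) = 18. Hence g₀ = 2/3 for F₄. -/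
noncomputable section

/-- The Gram matrix `S = D·A⁻¹` of the fundamental weights of `F₄`, with
`A⁻¹ = [[2,3,2,1],[3,6,4,2],[4,8,6,3],[2,4,3,2]]` and `D = diag(1,1,1/2,1/2)`. -/
def F4S : Matrix (Fin 4) (Fin 4) ℚ :=
  !![2, 3, 2, 1; 3, 6, 4, 2; 2, 4, 3, 3/2; 1, 2, 3/2, 1]

/-- The linear term `RᵀD` with `R = (16,30,42,22)` (from `2δ`) and
`D = diag(1,1,1/2,1/2)`. -/
def F4R : Fin 4 → ℚ := ![16, 30, 21, 11]

lemma F4S_nonneg : ∀ i j : Fin 4, 0 ≤ F4S i j := by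
  intro i j
  fin_cases i <;> fin_cases j <;> norm_num [F4S]

lemma F4R_nonneg : ∀ i : Fin 4, 0 ≤ F4R i := by
  intro i; fin_cases i <;> norm_num [F4R]

/-- `F₄`: the minimum of `(μ|μ+2δ) = nᵀSn + RᵀDn` over nonzero `n ∈ ℤ₊⁴`
(`μ = Σ nᵢϖᵢ ∈ Λ⁺ = P⁺ ∩ Λ⁺`) is `12`, achieved at `n = (0,0,0,1)` (`μ = ϖ₄`),
while the highest root `θ = ϖ₁` gives `(θ|θ+2δ) = 18`.  Hence `g₀ = 2/3`. -/
theorem F4_gap :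
    IsLeast {q : ℚ | ∃ n : Fin 4 → ℕ, n ≠ 0 ∧
        q = (∑ i : Fin 4, ∑ j : Fin 4, F4S i j * n i * n j) + ∑ i : Fin 4, F4R i * n i} 12
    ∧ ((∑ i : Fin 4, ∑ j : Fin 4, F4S i j * (if i = 3 then (1:ℚ) else 0) * (if j = 3 then (1:ℚ) else 0))
        + ∑ i : Fin 4, F4R i * (if i = 3 then (1:ℚ) else 0) = 12)
    ∧ ((∑ i : Fin 4, ∑ j : Fin 4, F4S i j * (if i = 0 then (1:ℚ) else 0) * (if j = 0 then (1:ℚ) else 0))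
        + ∑ i : Fin 4, F4R i * (if i = 0 then (1:ℚ) else 0) = 18)
    ∧ (12 : ℚ) / 18 = 2 / 3 := by
  refine ⟨⟨⟨fun i => if i = 3 then 1 else 0, ?_, ?_⟩, ?_⟩, ?_, ?_, by norm_num⟩
  · intro h
    have := congrFun h 3
    simp at this
  · simp [Fin.sum_univ_four, F4S, F4R]; norm_num
  · rintro q ⟨n, hn, rfl⟩
    obtain ⟨k, hk⟩ : ∃ k, n k ≠ 0 := Function.ne_iff.mp hn
    have hnn : ∀ i : Fin 4, (0:ℚ) ≤ (n i : ℚ) := fun i => Nat.cast_nonneg _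
    have hk1 : (1:ℚ) ≤ (n k : ℚ) := by
      exact_mod_cast Nat.one_le_iff_ne_zero.mpr hk
    have h1 : F4S k k * n k * n k ≤ ∑ j : Fin 4, F4S k j * n k * n j :=
      Finset.single_le_sum
        (fun j _ => mul_nonneg (mul_nonneg (F4S_nonneg k j) (hnn k)) (hnn j))
        (Finset.mem_univ k)
    have h2 : ∑ j : Fin 4, F4S k j * n k * n j ≤
        ∑ i : Fin 4, ∑ j : Fin 4, F4S i j * n i * n j :=
      Finset.single_le_sum
        (fun i _ => Finset.sum_nonneg fun j _ =>
          mul_nonneg (mul_nonneg (F4S_nonneg i j) (hnn i)) (hnn j))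
        (Finset.mem_univ k)
    have h3 : F4R k * n k ≤ ∑ i : Fin 4, F4R i * n i :=
      Finset.single_le_sum (fun i _ => mul_nonneg (F4R_nonneg i) (hnn i))
        (Finset.mem_univ k)
    have hSk : (1:ℚ) ≤ F4S k k := by fin_cases k <;> norm_num [F4S]
    have hRk : (11:ℚ) ≤ F4R k := by fin_cases k <;> norm_num [F4R]
    have key : (12:ℚ) ≤ F4S k k * n k * n k + F4R k * n k := by
      nlinarith [mul_le_mul hSk hk1 (by norm_num) (le_trans (by norm_num) hSk),
        mul_le_mul hRk hk1 (by norm_num) (le_trans (by norm_num) hRk)]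
    linarith
  · simp [Fin.sum_univ_four, F4S, F4R]; norm_num
  · simp [Fin.sum_univ_four, F4S, F4R]; norm_num
end
end
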